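/- Let {{-,-}} be a double bracket on an associative algebra A with associated single bracket {a,b} = m({{a,b}}). Then {[a,b],c} = 0 for all a,b,c in A; that is, the single bracket vanishes whenever its first argument is a commutator. -/

import Mathlib

/-!
Antisymmetry gives `{ab, c} = -m(τ {{c, ab}})` with `τ` the flip, and the derivation rule splits
`{{c, ab}}` into `{{c, a}} (1 ⊗ b) + (a ⊗ 1) {{c, b}}`. As `m (τ (u ⊗ v)) = v u`, the map `m ∘ τ`
takes the same value on `t (1 ⊗ x)` and on `(x ⊗ 1) t`, which makes `{ab, c}` symmetric in `a`, `b`.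
-/

namespace Stmt1

open TensorProduct

variable {R A : Type*} [CommRing R] [Ring A] [Algebra R A]

/-- The cyclic permutation τ_(123) on A⊗A⊗A : x⊗y⊗z ↦ z⊗x⊗y. -/
noncomputable def cyc3 (R A : Type*) [CommRing R] [Ring A] [Algebra R A] :
    (A ⊗[R] A) ⊗[R] A →ₗ[R] (A ⊗[R] A) ⊗[R] A :=
  ((TensorProduct.assoc R A A A).symm.toLinearMap).comp
    (TensorProduct.comm R (A ⊗[R] A) A).toLinearMap

/-- The triple bracket associated to a binary operation `D`:
{{a,b,c}} = {{a,{{b,c}}}}_L + τ_(123){{b,{{c,a}}}}_L + τ_(132){{c,{{a,b}}}}_L,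
where {{a,u⊗v}}_L = {{a,u}}⊗v. -/
noncomputable def tripleBr (D : A →ₗ[R] A →ₗ[R] A ⊗[R] A) (a b c : A) :
    (A ⊗[R] A) ⊗[R] A :=
  LinearMap.rTensor A (D a) (D b c)
    + cyc3 R A (LinearMap.rTensor A (D b) (D c a))
    + cyc3 R A (cyc3 R A (LinearMap.rTensor A (D c) (D a b)))

/-- The single bracket {a,b} = m({{a,b}}) associated to `D`. -/
noncomputable def sb (D : A →ₗ[R] A →ₗ[R] A ⊗[R] A) (a b : A) : A :=
  LinearMap.mul' R A (D a b)

theorem mul'_comm_mul_one_tmul {S B : Type*} [CommSemiring S] [Semiring B] [Algebra S B]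
    (t : B ⊗[S] B) (x : B) :
    LinearMap.mul' S B (TensorProduct.comm S B B (t * (1 ⊗ₜ x))) =
      LinearMap.mul' S B (TensorProduct.comm S B B ((x ⊗ₜ 1) * t)) := by
  induction t using TensorProduct.induction_on with
  | zero => simp
  | tmul u v => simp [mul_assoc]
  | add s t hs ht => simp only [add_mul, mul_add, map_add, hs, ht]

theorem sb_mul_comm (D : A →ₗ[R] A →ₗ[R] A ⊗[R] A)
    (hder : ∀ a b c : A, D a (b * c) = D a b * (1 ⊗ₜ[R] c) + (b ⊗ₜ[R] 1) * D a c)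
    (hanti : ∀ a b : A, D a b = - (TensorProduct.comm R A A) (D b a)) (a b c : A) :
    sb D (a * b) c = sb D (b * a) c := by
  simp only [sb, hanti _ c, hder c, map_neg, map_add, mul'_comm_mul_one_tmul (D c a),
    mul'_comm_mul_one_tmul (D c b), add_comm]

/-- The single bracket vanishes on commutators in its first argument. -/
theorem sb_commutator_left (D : A →ₗ[R] A →ₗ[R] A ⊗[R] A)
    -- derivation in the second argument for the outer bimodule structure
    (hder : ∀ a b c : A, D a (b * c) = D a b * (1 ⊗ₜ[R] c) + (b ⊗ₜ[R] 1) * D a c)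
    -- antisymmetry {{a,b}} = -{{b,a}}°
    (hanti : ∀ a b : A, D a b = - (TensorProduct.comm R A A) (D b a)) :
    ∀ a b c : A, sb D (a * b - b * a) c = 0 := by
  intro a b c
  have hsub : sb D (a * b - b * a) c = sb D (a * b) c - sb D (b * a) c := by
    simp only [sb, map_sub, LinearMap.sub_apply]
  rw [hsub, sb_mul_comm D hder hanti, sub_self]

end Stmt1
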